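/- Let d be a fixed positive integer. Then there exists an integer N such that for all n ≥ N, α_{n+1}^d > α_n^d; that is, the sequence {α_n^d} in n is eventually strictly increasing. -/

import Mathlib

/-!
A tuple fails to be zero-sum-free exactly when it lies in one of the `2 ^ d - 1` subgroups
`{v | ∑ i ∈ S, v i = 0}`, `S ≠ ∅`, of `(ZMod n) ^ d`. Each has index `n` and any two distinct
ones meet in a subgroup of index `n ^ 2`, being kernels of surjections onto `ZMod n` and
`(ZMod n) ^ 2`.
The union bound and the second Bonferroni inequality therefore give
`α_n = n ^ d - (2 ^ d - 1) n ^ (d - 1) + O(n ^ (d - 2))`, so that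
`α_{n+1} - α_n ≥ n ^ (d - 1) - O(n ^ (d - 2))`, which is positive once `n > (2 ^ d - 1) ^ 2`.
-/

/-- A tuple `v : Fin d → ZMod n` is zero-sum-free if no non-empty subset of its
components sums to zero in `ZMod n`. -/
def ZeroSumFree {n d : ℕ} (v : Fin d → ZMod n) : Prop :=
  ∀ S : Finset (Fin d), S.Nonempty → ∑ i ∈ S, v i ≠ 0

/-- `alphaZSF n d` is the number of zero-sum-free `d`-tuples in `(ZMod n)^d`. -/
noncomputable def alphaZSF (n d : ℕ) : ℕ :=
  Nat.card {v : Fin d → ZMod n // ZeroSumFree v}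

/-- A tuple is irreducible if `gcd(v₁, ..., v_d, n) = 1`, where components are
identified with their representatives in `{0, 1, ..., n-1}`. -/
def IrreducibleTuple {n d : ℕ} (v : Fin d → ZMod n) : Prop :=
  Nat.gcd (Finset.univ.gcd fun i => (v i).val) n = 1

/-- `betaZSF n d` is the number of irreducible zero-sum-free `d`-tuples in `(ZMod n)^d`. -/
noncomputable def betaZSF (n d : ℕ) : ℕ :=
  Nat.card {v : Fin d → ZMod n // ZeroSumFree v ∧ IrreducibleTuple v}

open Finset

theorem AddMonoidHom.card_filter_eq_zero_mul {A B : Type*} [AddGroup A] [Fintype A] [AddGroup B]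
    [Fintype B] [DecidableEq B] (f : A →+ B) (hf : Function.Surjective f) :
    #{a | f a = 0} * Fintype.card B = Fintype.card A := by
  have hfiber (b : B) : #{a | f a = b} = #{a | f a = 0} :=
    AddMonoidHom.card_fiber_eq_of_mem_range f (hf b) (hf 0)
  calc #{a | f a = 0} * Fintype.card B = ∑ b, #{a | f a = b} := by simp [hfiber, mul_comm]
    _ = Fintype.card A := (card_eq_sum_card_fiberwise fun a _ => mem_univ (f a)).symm

section SubsetSum

variable {ι G : Type*} [AddCommGroup G]

variable (G) in
def subsetSumHom (S : Finset ι) : (ι → G) →+ G :=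
  ∑ i ∈ S, Pi.evalAddMonoidHom (fun _ => G) i

@[simp]
theorem subsetSumHom_apply (S : Finset ι) (v : ι → G) :
    subsetSumHom G S v = ∑ i ∈ S, v i := by
  simp [subsetSumHom]

variable [DecidableEq ι]

theorem subsetSumHom_single (S : Finset ι) (i : ι) (g : G) :
    subsetSumHom G S (Pi.single i g) = if i ∈ S then g else 0 := by
  simp [Finset.sum_pi_single']

theorem subsetSumHom_surjective {S : Finset ι} (hS : S.Nonempty) :
    Function.Surjective (subsetSumHom G S) := by
  obtain ⟨i, hi⟩ := hS
  exact fun g => ⟨Pi.single i g, by simp [hi]⟩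

theorem subsetSumHom_prod_surjective {S T : Finset ι} {i : ι} (hiS : i ∈ S) (hiT : i ∉ T)
    (hT : T.Nonempty) : Function.Surjective ((subsetSumHom G S).prod (subsetSumHom G T)) := by
  rintro ⟨g, h⟩
  obtain ⟨w, rfl⟩ := subsetSumHom_surjective (G := G) hT h
  refine ⟨w + Pi.single i (g - subsetSumHom G S w), ?_⟩
  simp [subsetSumHom_single, hiS, hiT, -subsetSumHom_apply]

variable [Fintype ι] [Fintype G] [DecidableEq G]

variable (G) in
def sumZeroSet (S : Finset ι) : Finset (ι → G) := {v | ∑ i ∈ S, v i = 0}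

theorem card_sumZeroSet_mul {S : Finset ι} (hS : S.Nonempty) :
    #(sumZeroSet G S) * Fintype.card G = Fintype.card G ^ Fintype.card ι := by
  simpa [sumZeroSet] using (subsetSumHom G S).card_filter_eq_zero_mul (subsetSumHom_surjective hS)

theorem card_sumZeroSet_inter_mul {S T : Finset ι} (hS : S.Nonempty) (hT : T.Nonempty)
    (hST : S ≠ T) :
    #(sumZeroSet G S ∩ sumZeroSet G T) * Fintype.card G ^ 2 =
      Fintype.card G ^ Fintype.card ι := by
  wlog hsub : ¬ S ⊆ T generalizing S T
  · rw [inter_comm]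
    exact this hT hS hST.symm fun hTS => hST (antisymm (not_not.1 hsub) hTS)
  obtain ⟨i, hiS, hiT⟩ := not_subset.1 hsub
  simpa [sumZeroSet, filter_and, sq] using
    AddMonoidHom.card_filter_eq_zero_mul _ (subsetSumHom_prod_surjective (G := G) hiS hiT hT)

end SubsetSum

theorem Finset.sum_card_le_card_biUnion_add_sum_card_inter {α β : Type*} [DecidableEq α]
    [DecidableEq β] (F : Finset α) (A : α → Finset β) :
    ∑ s ∈ F, #(A s) ≤ #(F.biUnion A) + ∑ s ∈ F, ∑ t ∈ F.erase s, #(A s ∩ A t) := by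
  induction F using Finset.induction_on with
  | empty => simp
  | @insert a F ha ih =>
    have hunion := card_union_add_card_inter (A a) (F.biUnion A)
    have hinter : #(A a ∩ F.biUnion A) ≤ ∑ t ∈ F, #(A a ∩ A t) := by
      rw [inter_biUnion]; exact card_biUnion_le
    have hpairs : ∑ s ∈ F, ∑ t ∈ F.erase s, #(A s ∩ A t) ≤
        ∑ s ∈ F, ∑ t ∈ (insert a F).erase s, #(A s ∩ A t) :=
      sum_le_sum fun s _ => sum_le_sum_of_subset (erase_subset_erase s (subset_insert a F))
    rw [sum_insert ha, sum_insert ha, biUnion_insert, erase_insert ha]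
    omega

section ZeroSumFree

variable {n d : ℕ} [NeZero n]

variable (n d) in
def zeroSumTuples : Finset (Fin d → ZMod n) :=
  ({S | S.Nonempty} : Finset (Finset (Fin d))).biUnion (sumZeroSet (ZMod n))

theorem card_nonempty_subsets_fin :
    #({S | S.Nonempty} : Finset (Finset (Fin d))) = 2 ^ d - 1 := by
  simp [nonempty_iff_ne_empty, filter_ne', card_univ]

theorem alphaZSF_add_card_zeroSumTuples : alphaZSF n d + #(zeroSumTuples n d) = n ^ d := by
  have hfree (v : Fin d → ZMod n) : ZeroSumFree v ↔ v ∉ zeroSumTuples n d := by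
    simp [ZeroSumFree, zeroSumTuples, sumZeroSet]
  rw [alphaZSF, Nat.card_congr (Equiv.subtypeEquivRight hfree), Nat.card_eq_fintype_card,
    Fintype.card_subtype_compl, Fintype.card_coe, Nat.sub_add_cancel (card_le_univ _)]
  simp

theorem card_sumZeroSet_zmod_mul {S : Finset (Fin d)} (hS : S.Nonempty) :
    #(sumZeroSet (ZMod n) S) * n = n ^ d := by
  simpa using card_sumZeroSet_mul (G := ZMod n) hS

theorem card_sumZeroSet_zmod_inter_mul {S T : Finset (Fin d)} (hS : S.Nonempty) (hT : T.Nonempty)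
    (hST : S ≠ T) : #(sumZeroSet (ZMod n) S ∩ sumZeroSet (ZMod n) T) * n ^ 2 = n ^ d := by
  simpa using card_sumZeroSet_inter_mul (G := ZMod n) hS hT hST

theorem card_zeroSumTuples_mul_le : n * #(zeroSumTuples n d) ≤ (2 ^ d - 1) * n ^ d := by
  calc n * #(zeroSumTuples n d)
      ≤ n * ∑ S ∈ ({S | S.Nonempty} : Finset (Finset (Fin d))), #(sumZeroSet (ZMod n) S) :=
        Nat.mul_le_mul_left n card_biUnion_le
    _ = (2 ^ d - 1) * n ^ d := by
        rw [mul_sum, sum_congr rfl fun S hS => ?_, sum_const, card_nonempty_subsets_fin,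
          smul_eq_mul]
        rw [mul_comm, card_sumZeroSet_zmod_mul (mem_filter.1 hS).2]

-- Scaled by `n ^ 2` so that no exponent `d - 2` appears: in `ℕ` it would truncate at `d = 1`.
theorem le_card_zeroSumTuples :
    (2 ^ d - 1) * n ^ (d + 1) ≤ n ^ 2 * #(zeroSumTuples n d) + (2 ^ d - 1) ^ 2 * n ^ d := by
  set F : Finset (Finset (Fin d)) := {S | S.Nonempty}
  have hsingle (S) (hS : S ∈ F) : n ^ 2 * #(sumZeroSet (ZMod n) S) = n ^ (d + 1) := by
    rw [pow_succ n d, ← card_sumZeroSet_zmod_mul (mem_filter.1 hS).2]; ring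
  have hpair (S) (hS : S ∈ F) (T) (hT : T ∈ F.erase S) :
      n ^ 2 * #(sumZeroSet (ZMod n) S ∩ sumZeroSet (ZMod n) T) = n ^ d := by
    rw [mul_comm, card_sumZeroSet_zmod_inter_mul (mem_filter.1 hS).2
      (mem_filter.1 (mem_of_mem_erase hT)).2 (ne_of_mem_erase hT).symm]
  have hpairs : n ^ 2 * ∑ S ∈ F, ∑ T ∈ F.erase S,
      #(sumZeroSet (ZMod n) S ∩ sumZeroSet (ZMod n) T) ≤ (2 ^ d - 1) ^ 2 * n ^ d := by
    simp only [mul_sum]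
    calc ∑ S ∈ F, ∑ T ∈ F.erase S, n ^ 2 * #(sumZeroSet (ZMod n) S ∩ sumZeroSet (ZMod n) T)
        = ∑ S ∈ F, ∑ T ∈ F.erase S, n ^ d :=
          sum_congr rfl fun S hS => sum_congr rfl (hpair S hS)
      _ ≤ ∑ S ∈ F, ∑ T ∈ F, n ^ d :=
          sum_le_sum fun S _ => sum_le_sum_of_subset (erase_subset S F)
      _ = (2 ^ d - 1) ^ 2 * n ^ d := by simp [F, card_nonempty_subsets_fin, sq, mul_assoc]
  have hbonf := Nat.mul_le_mul_left (n ^ 2)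
    (sum_card_le_card_biUnion_add_sum_card_inter F (sumZeroSet (ZMod n)))
  rw [mul_sum, sum_congr rfl hsingle, sum_const, card_nonempty_subsets_fin, smul_eq_mul,
    mul_add] at hbonf
  exact hbonf.trans (Nat.add_le_add_left hpairs _)

end ZeroSumFree

theorem succ_mul_pow_le_mul_succ_pow (n : ℕ) {d : ℕ} (hd : 0 < d) :
    (n + 1) * n ^ d ≤ n * (n + 1) ^ d := by
  obtain ⟨e, rfl⟩ := Nat.exists_eq_add_of_lt hd
  rw [zero_add, pow_succ, pow_succ]
  calc (n + 1) * (n ^ e * n) = n * (n ^ e * (n + 1)) := by ring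
    _ ≤ n * ((n + 1) ^ e * (n + 1)) := by gcongr; omega

section Growth

variable {n d : ℕ}

theorem le_mul_alphaZSF_add [NeZero n] :
    n ^ (d + 1) ≤ n * alphaZSF n d + (2 ^ d - 1) * n ^ d := by
  have hsum : n * alphaZSF n d + n * #(zeroSumTuples n d) = n ^ (d + 1) := by
    rw [← mul_add, alphaZSF_add_card_zeroSumTuples, pow_succ, mul_comm]
  linarith [card_zeroSumTuples_mul_le (n := n) (d := d)]

theorem sq_mul_alphaZSF_add_le [NeZero n] :
    n ^ 2 * alphaZSF n d + (2 ^ d - 1) * n ^ (d + 1) ≤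
      n ^ (d + 2) + (2 ^ d - 1) ^ 2 * n ^ d := by
  have hsum : n ^ 2 * alphaZSF n d + n ^ 2 * #(zeroSumTuples n d) = n ^ (d + 2) := by
    rw [← mul_add, alphaZSF_add_card_zeroSumTuples, pow_add, mul_comm]
  linarith [le_card_zeroSumTuples (n := n) (d := d)]

theorem alphaZSF_lt_alphaZSF_succ (hd : 0 < d) (hn : (2 ^ d - 1) ^ 2 < n) :
    alphaZSF n d < alphaZSF (n + 1) d := by
  have : NeZero n := ⟨by omega⟩
  have hupper := sq_mul_alphaZSF_add_le (n := n) (d := d)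
  have hlower := le_mul_alphaZSF_add (n := n + 1) (d := d)
  have hpow := succ_mul_pow_le_mul_succ_pow n hd
  have hP : 0 < n ^ d := pow_pos (by omega) d
  rw [show n ^ (d + 2) = n ^ 2 * n ^ d by ring, show n ^ (d + 1) = n * n ^ d by ring] at hupper
  rw [show (n + 1) ^ (d + 1) = (n + 1) * (n + 1) ^ d by ring] at hlower
  generalize 2 ^ d - 1 = m at hn hupper hlower
  generalize n ^ d = P at hupper hpow hP
  generalize (n + 1) ^ d = Q at hlower hpow
  generalize alphaZSF n d = a at hupper ⊢
  generalize alphaZSF (n + 1) d = a' at hlower ⊢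
  by_contra! hle
  have hm : m ≤ n := by nlinarith
  zify at *
  -- the lower bound at `n + 1` against the upper bound at `n`; cancelling `(n + 1) n ^ d`
  -- leaves `n ≤ m ^ 2`
  have key : ((n : ℤ) + 1) * P * (n * (n + 1 - m)) ≤ (n + 1) * P * (n ^ 2 + m ^ 2 - m * n) :=
    calc ((n : ℤ) + 1) * P * (n * (n + 1 - m)) = n * (n + 1 - m) * ((n + 1) * P) := by ring
      _ ≤ n * (n + 1 - m) * (n * Q) := by gcongr; nlinarith
      _ = n ^ 2 * ((n + 1) * Q - m * Q) := by ring
      _ ≤ n ^ 2 * ((n + 1) * a') := by gcongr; linarith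
      _ ≤ n ^ 2 * ((n + 1) * a) := by gcongr
      _ = (n + 1) * (n ^ 2 * a) := by ring
      _ ≤ (n + 1) * (n ^ 2 * P + m ^ 2 * P - m * (n * P)) := by gcongr; linarith
      _ = (n + 1) * P * (n ^ 2 + m ^ 2 - m * n) := by ring
  have := le_of_mul_le_mul_left key (by positivity)
  linarith

end Growth

theorem eventual_column_hypothesis (d : ℕ) (hd : 0 < d) :
    ∃ N : ℕ, ∀ n : ℕ, N ≤ n → alphaZSF n d < alphaZSF (n + 1) d :=
  ⟨(2 ^ d - 1) ^ 2 + 1, fun _ hn => alphaZSF_lt_alphaZSF_succ hd hn⟩
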